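/- Let d ≥ 1 and let A_1, …, A_N be real symmetric d×d matrices. Then (A_1, …, A_N) has the phase retrieval property on ℝ^d if and only if every nonzero real symmetric d×d matrix Q with rank(Q) ≤ 2 and Tr(A_jQ) = 0 for all 1 ≤ j ≤ N has exactly two nonzero eigenvalues and these have the same sign (equivalently, rank(Q) = 2 and Q is positive semidefinite or negative semidefinite). -/

import Mathlib

open Matrix

/-- A tuple of real symmetric `d×d` matrices has the phase retrieval property on `ℝ^d`
if equality of all quadratic measurements implies equality up to sign. -/
def PhaseRetrievableR {d N : ℕ} (A : Fin N → Matrix (Fin d) (Fin d) ℝ) : Prop :=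
  ∀ x y : Fin d → ℝ,
    (∀ j, x ⬝ᵥ (A j) *ᵥ x = y ⬝ᵥ (A j) *ᵥ y) → x = y ∨ x = -y

/-!
Lifting `x ↦ x xᵀ` turns the measurements into the linear functionals `Q ↦ tr (A_j Q)`, and
`x xᵀ = y yᵀ` iff `x = ±y`; so phase retrieval says that no nonzero `x xᵀ - y yᵀ` lies in their
common kernel. By the spectral theorem, a symmetric matrix of rank at most two that is not
semidefinite of rank two has at most one positive and at most one negative eigenvalue, hence is
of the form `x xᵀ - y yᵀ`. Conversely `x xᵀ - y yᵀ` is semidefinite only when `y` is a multiple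
of `x` (or vice versa), and then its rank is at most one.
-/

namespace Matrix

variable {ι m n R K : Type*}

theorem trace_mul_vecMulVec [Fintype n] [CommSemiring R] (A : Matrix n n R) (x y : n → R) :
    trace (A * vecMulVec x y) = A *ᵥ x ⬝ᵥ y := by
  rw [mul_vecMulVec, trace_vecMulVec]

theorem vecMulVec_self_inj_iff [CommRing R] [NoZeroDivisors R] {x y : n → R} :
    vecMulVec x x = vecMulVec y y ↔ x = y ∨ x = -y := by
  refine ⟨fun h => ?_, by rintro (rfl | rfl) <;> simp [neg_vecMulVec, vecMulVec_neg]⟩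
  have hxy (a b : n) : x a * x b = y a * y b := congrFun (congrFun h a) b
  by_cases hx : x = 0
  · subst hx
    left
    funext a
    simpa [eq_comm] using hxy a a
  obtain ⟨i, hi⟩ := Function.ne_iff.1 hx
  rcases mul_self_eq_mul_self_iff.1 (hxy i i) with hyi | hyi
  · exact .inl <| funext fun b => mul_left_cancel₀ hi (by rw [hxy, hyi])
  · exact .inr <| funext fun b => mul_left_cancel₀ hi (by rw [hxy, hyi, Pi.neg_apply]; ring)

theorem rank_sub_le [Fintype n] [Field K] (A B : Matrix m n K) :
    (A - B).rank ≤ A.rank + B.rank := by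
  refine (Submodule.finrank_mono ?_).trans (Submodule.finrank_add_le_finrank_add_finrank _ _)
  rintro _ ⟨v, rfl⟩
  simpa [sub_mulVec] using Submodule.sub_mem_sup
    (LinearMap.mem_range_self A.mulVecLin v) (LinearMap.mem_range_self B.mulVecLin v)

theorem rank_neg [Fintype n] [CommRing R] (A : Matrix m n R) : (-A).rank = A.rank := by
  have : (-A).mulVecLin = -A.mulVecLin := by ext; simp
  rw [rank, rank, this, LinearMap.range_neg]

theorem exists_eq_smul_of_forall_dotProduct_eq_zero [Fintype n] [Field K] [LinearOrder K]
    [IsStrictOrderedRing K] {x y : n → K} (h : ∀ v, x ⬝ᵥ v = 0 → y ⬝ᵥ v = 0) :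
    ∃ c : K, y = c • x := by
  by_cases hx : x = 0
  · subst hx
    exact ⟨0, by simpa [dotProduct_self_eq_zero] using h y (zero_dotProduct y)⟩
  have hxx : x ⬝ᵥ x ≠ 0 := mt dotProduct_self_eq_zero.1 hx
  set c := x ⬝ᵥ y / x ⬝ᵥ x
  have hxv : x ⬝ᵥ (y - c • x) = 0 := by
    rw [dotProduct_sub, dotProduct_smul, smul_eq_mul, div_mul_cancel₀ _ hxx, sub_self]
  refine ⟨c, sub_eq_zero.1 (dotProduct_self_eq_zero.1 ?_)⟩
  rw [sub_dotProduct, h _ hxv, smul_dotProduct, hxv, smul_zero, sub_zero]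

theorem dotProduct_vecMulVec_mulVec [Fintype n] [CommSemiring R] (a x y b : n → R) :
    a ⬝ᵥ vecMulVec x y *ᵥ b = (a ⬝ᵥ x) * (y ⬝ᵥ b) := by
  rw [vecMulVec_mulVec, op_smul_eq_smul, dotProduct_smul, smul_eq_mul, mul_comm]

theorem rank_vecMulVec_sub_le_one_of_posSemidef [Fintype n] {x y : n → ℝ}
    (h : (vecMulVec x x - vecMulVec y y).PosSemidef) :
    (vecMulVec x x - vecMulVec y y).rank ≤ 1 := by
  obtain ⟨c, rfl⟩ : ∃ c : ℝ, y = c • x := by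
    refine exists_eq_smul_of_forall_dotProduct_eq_zero fun v hxv => ?_
    have hv := h.dotProduct_mulVec_nonneg v
    rw [star_trivial, sub_mulVec, dotProduct_sub, dotProduct_vecMulVec_mulVec,
      dotProduct_vecMulVec_mulVec, dotProduct_comm v x, hxv, zero_mul, zero_sub,
      neg_nonneg, dotProduct_comm v y] at hv
    exact mul_self_eq_zero.1 (le_antisymm hv (mul_self_nonneg _))
  have : vecMulVec x x - vecMulVec (c • x) (c • x) = vecMulVec ((1 - c * c) • x) x := by
    rw [smul_vecMulVec, smul_vecMulVec, vecMulVec_smul, smul_smul, sub_smul, one_smul]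
  rw [this]
  exact rank_vecMulVec_le _ _

theorem not_rank_eq_two_and_semidef_vecMulVec_sub [Fintype n] (x y : n → ℝ) :
    ¬((vecMulVec x x - vecMulVec y y).rank = 2 ∧
      ((vecMulVec x x - vecMulVec y y).PosSemidef ∨
        (-(vecMulVec x x - vecMulVec y y)).PosSemidef)) := by
  rintro ⟨hrk, hpsd | hnsd⟩
  · have := rank_vecMulVec_sub_le_one_of_posSemidef hpsd
    omega
  · rw [neg_sub] at hnsd
    have := rank_vecMulVec_sub_le_one_of_posSemidef hnsd
    rw [← neg_sub, rank_neg] at this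
    omega

theorem sum_vecMulVec_self_of_subsingleton [Fintype ι] [CommSemiring R] {f : ι → n → R}
    (hf : {i | f i ≠ 0}.Subsingleton) :
    ∑ i, vecMulVec (f i) (f i) = vecMulVec (∑ i, f i) (∑ i, f i) := by
  by_cases h : ∃ i, f i ≠ 0
  · obtain ⟨i, hi⟩ := h
    have hzero (j : ι) (hj : j ≠ i) : f j = 0 := by_contra fun h' => hj (hf h' hi)
    rw [Finset.sum_eq_single i (fun j _ hj => by simp [hzero j hj]) (by simp),
      Finset.sum_eq_single i (fun j _ hj => hzero j hj) (by simp)]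
  · simp only [ne_eq, not_exists, not_not] at h
    simp [h]

theorem smul_vecMulVec_self_eq_sub (r : ℝ) (u : n → ℝ) :
    r • vecMulVec u u = vecMulVec (√r • u) (√r • u) - vecMulVec (√(-r) • u) (√(-r) • u) := by
  -- `√` vanishes on negative numbers, so exactly one of the two terms survives.
  have hr : r = √r * √r - √(-r) * √(-r) := by
    rcases le_total 0 r with h | h
    · rw [Real.mul_self_sqrt h, Real.sqrt_eq_zero'.2 (neg_nonpos.2 h), mul_zero, sub_zero]
    · rw [Real.mul_self_sqrt (neg_nonneg.2 h), Real.sqrt_eq_zero'.2 h, mul_zero, zero_sub, neg_neg]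
  rw [smul_vecMulVec, smul_vecMulVec, vecMulVec_smul, vecMulVec_smul, smul_smul, smul_smul,
    ← sub_smul, ← hr]

variable [Fintype n] [DecidableEq n]

theorem IsHermitian.eq_sum_eigenvalues_smul_vecMulVec {Q : Matrix n n ℝ} (hQ : Q.IsHermitian) :
    Q = ∑ i, hQ.eigenvalues i •
      vecMulVec ⇑(hQ.eigenvectorBasis i) ⇑(hQ.eigenvectorBasis i) := by
  ext a b
  conv_lhs => rw [hQ.spectral_theorem, Unitary.conjStarAlgAut_apply]
  simp only [RCLike.ofReal_real_eq_id, CompTriple.comp_eq, mul_apply, eigenvectorUnitary_apply,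
    diagonal_apply, mul_ite, mul_zero, Finset.sum_ite_eq', Finset.mem_univ, ↓reduceIte, star_apply,
    star_trivial, sum_apply, smul_apply, vecMulVec_apply, smul_eq_mul]
  exact Finset.sum_congr rfl fun _ _ => by ring

theorem IsHermitian.exists_eq_sum_vecMulVec_sub_sum_vecMulVec {Q : Matrix n n ℝ}
    (hQ : Q.IsHermitian) :
    ∃ f g : n → n → ℝ, (∀ i, f i ≠ 0 → 0 < hQ.eigenvalues i) ∧
      (∀ i, g i ≠ 0 → hQ.eigenvalues i < 0) ∧
      Q = ∑ i, vecMulVec (f i) (f i) - ∑ i, vecMulVec (g i) (g i) := by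
  refine ⟨fun i => √(hQ.eigenvalues i) • ⇑(hQ.eigenvectorBasis i),
    fun i => √(-hQ.eigenvalues i) • ⇑(hQ.eigenvectorBasis i),
    fun i hi => Real.sqrt_pos.1 ((Real.sqrt_nonneg _).lt_of_ne' (left_ne_zero_of_smul hi)),
    fun i hi => neg_pos.1 <|
      Real.sqrt_pos.1 ((Real.sqrt_nonneg _).lt_of_ne' (left_ne_zero_of_smul hi)),
    ?_⟩
  rw [← Finset.sum_sub_distrib]
  simp_rw [← smul_vecMulVec_self_eq_sub]
  exact hQ.eq_sum_eigenvalues_smul_vecMulVec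

theorem IsHermitian.card_le_rank {𝕜 : Type*} [RCLike 𝕜] {Q : Matrix n n 𝕜} (hQ : Q.IsHermitian)
    {s : Finset n} (hs : ∀ i ∈ s, hQ.eigenvalues i ≠ 0) : s.card ≤ Q.rank := by
  rw [hQ.rank_eq_card_non_zero_eigs, Fintype.card_subtype]
  exact Finset.card_le_card fun i hi => Finset.mem_filter.2 ⟨Finset.mem_univ _, hs i hi⟩

theorem IsHermitian.eq_or_eq_of_rank_le_two {𝕜 : Type*} [RCLike 𝕜] {Q : Matrix n n 𝕜}
    (hQ : Q.IsHermitian) (hrk : Q.rank ≤ 2) {i j k : n} (hij : i ≠ j)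
    (hi : hQ.eigenvalues i ≠ 0) (hj : hQ.eigenvalues j ≠ 0) (hk : hQ.eigenvalues k ≠ 0) :
    k = i ∨ k = j := by
  by_contra! hkij
  have := hQ.card_le_rank (s := {i, j, k}) (by simp [hi, hj, hk])
  rw [Finset.card_insert_of_notMem (by simp [hij, hkij.1.symm]),
    Finset.card_pair hkij.2.symm] at this
  omega

theorem IsSymm.exists_eq_vecMulVec_sub_of_rank_le_two {Q : Matrix n n ℝ} (hQ : Q.IsSymm)
    (hrk : Q.rank ≤ 2) (hQ2 : ¬(Q.rank = 2 ∧ (Q.PosSemidef ∨ (-Q).PosSemidef))) :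
    ∃ x y : n → ℝ, Q = vecMulVec x x - vecMulVec y y := by
  have hH : Q.IsHermitian := isHermitian_iff_isSymm.2 hQ
  obtain ⟨f, g, hf, hg, hQfg⟩ := hH.exists_eq_sum_vecMulVec_sub_sum_vecMulVec
  have hpsd (v : n → n → ℝ) : (∑ i, vecMulVec (v i) (v i)).PosSemidef :=
    posSemidef_sum _ fun i _ => by simpa using posSemidef_vecMulVec_self_star (v i)
  have hrk2 {i j : n} (hij : i ≠ j) (hi : hH.eigenvalues i ≠ 0) (hj : hH.eigenvalues j ≠ 0) :
      Q.rank = 2 :=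
    le_antisymm hrk ((Finset.card_pair hij).symm.le.trans (hH.card_le_rank (by simp [hi, hj])))
  have hf1 : {i | f i ≠ 0}.Subsingleton := by
    intro i hi j hj
    by_contra hij
    have hg0 (k : n) : g k = 0 := by
      by_contra hk
      rcases hH.eq_or_eq_of_rank_le_two hrk hij (hf i hi).ne' (hf j hj).ne' (hg k hk).ne
        with rfl | rfl <;> linarith [hf _ hi, hf _ hj, hg _ hk]
    refine hQ2 ⟨hrk2 hij (hf i hi).ne' (hf j hj).ne', .inl ?_⟩
    simpa [hQfg, show g = 0 from funext hg0] using hpsd f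
  have hg1 : {i | g i ≠ 0}.Subsingleton := by
    intro i hi j hj
    by_contra hij
    have hf0 (k : n) : f k = 0 := by
      by_contra hk
      rcases hH.eq_or_eq_of_rank_le_two hrk hij (hg i hi).ne (hg j hj).ne (hf k hk).ne'
        with rfl | rfl <;> linarith [hg _ hi, hg _ hj, hf _ hk]
    refine hQ2 ⟨hrk2 hij (hg i hi).ne (hg j hj).ne, .inr ?_⟩
    simpa [hQfg, show f = 0 from funext hf0] using hpsd g
  exact ⟨∑ i, f i, ∑ i, g i, by
    rw [hQfg, sum_vecMulVec_self_of_subsingleton hf1, sum_vecMulVec_self_of_subsingleton hg1]⟩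

end Matrix

theorem phaseRetrievableR_iff {d N : ℕ} (A : Fin N → Matrix (Fin d) (Fin d) ℝ) :
    PhaseRetrievableR A ↔ ∀ x y : Fin d → ℝ,
      (∀ j, trace (A j * (vecMulVec x x - vecMulVec y y)) = 0) →
        vecMulVec x x - vecMulVec y y = 0 := by
  simp only [PhaseRetrievableR, mul_sub, trace_sub, trace_mul_vecMulVec, sub_eq_zero,
    vecMulVec_self_inj_iff, dotProduct_comm (A _ *ᵥ _)]

theorem stmt_3_general (d N : ℕ) (A : Fin N → Matrix (Fin d) (Fin d) ℝ) :
    PhaseRetrievableR A ↔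
      ∀ Q : Matrix (Fin d) (Fin d) ℝ, Q ≠ 0 → Q.IsSymm → Q.rank ≤ 2 →
        (∀ j, Matrix.trace (A j * Q) = 0) →
        Q.rank = 2 ∧ (Q.PosSemidef ∨ (-Q).PosSemidef) := by
  rw [phaseRetrievableR_iff]
  constructor
  · intro hPR Q hQ0 hQ hrk htr
    by_contra hQ2
    obtain ⟨x, y, rfl⟩ := hQ.exists_eq_vecMulVec_sub_of_rank_le_two hrk hQ2
    exact hQ0 (hPR x y htr)
  · intro h x y htr
    by_contra hQ0
    have hsymm : (vecMulVec x x - vecMulVec y y).IsSymm := by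
      simp [IsSymm, transpose_sub, transpose_vecMulVec]
    have hrk : (vecMulVec x x - vecMulVec y y).rank ≤ 2 :=
      (rank_sub_le _ _).trans (add_le_add (rank_vecMulVec_le x x) (rank_vecMulVec_le y y))
    exact not_rank_eq_two_and_semidef_vecMulVec_sub x y (h _ hQ0 hsymm hrk htr)

theorem stmt_3 (d N : ℕ) (hd : 1 ≤ d) (A : Fin N → Matrix (Fin d) (Fin d) ℝ)
    (hA : ∀ j, (A j).IsSymm) :
    PhaseRetrievableR A ↔
      ∀ Q : Matrix (Fin d) (Fin d) ℝ, Q ≠ 0 → Q.IsSymm → Q.rank ≤ 2 →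
        (∀ j, Matrix.trace (A j * Q) = 0) →
        Q.rank = 2 ∧ (Q.PosSemidef ∨ (-Q).PosSemidef) :=
  stmt_3_general d N A
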